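/- Let G be a finite index set, m a positive integer, σ > 0, τ = σ/m, and b, c > 0. Let s be a natural number and let v : {1,…,s+1} → ℝ, α : {1,…,s+1} × {1,…,s+1} → ℝ satisfy v_i ≥ 0, α_{ij} ≥ 0 (for j < i) and v_i + Σ_{j<i} α_{ij} = 1 for every i, and let 𝒞 > 0. Let M ≥ 0 and T̄ ≥ 0, and let Φ : (G → ℝ) → (G → ℝ) be a map such that whenever X : G → ℝ satisfies 0 ≤ X(g) ≤ M for all g ∈ G, then 0 ≤ Φ(X)(g) ≤ T̄ for all g ∈ G. Let Sⁿ, Iⁿ, Rⁿ : G → ℝ be defined for all integers n ≥ −m, where for each n ≥ 0 and each g ∈ G, writing T = Φ(I^{n−m})(g), the next values S^{n+1}(g) = S_(s+1), I^{n+1}(g) = I_(s+1), R^{n+1}(g) = R_(s+1) are obtained from the stage recursion S_(i) = v_i·Sⁿ(g) + Σ_{j<i} α_{ij}·(S_(j) − (τ/𝒞)·(S_(j)·T + c·S_(j))), I_(i) = v_i·Iⁿ(g) + Σ_{j<i} α_{ij}·(I_(j) + (τ/𝒞)·(S_(j)·T − b·I_(j))), R_(i) = v_i·Rⁿ(g)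 + Σ_{j<i} α_{ij}·(R_(j) + (τ/𝒞)·(b·I_(j) + c·S_(j))). Assume the history satisfies, for all −m ≤ n ≤ 0 and all g ∈ G: Sⁿ(g) ≥ 0, Iⁿ(g) ≥ 0, Rⁿ(g) ≥ 0 and Sⁿ(g) + Iⁿ(g) + Rⁿ(g) = S⁰(g) + I⁰(g) + R⁰(g), and that S⁰(g) + I⁰(g) + R⁰(g) ≤ M for all g ∈ G. If τ ≤ 𝒞·min(1/(T̄ + c), 1/b), then for every n ≥ 0 and every g ∈ G: Sⁿ(g) ≥ 0, Iⁿ(g) ≥ 0, Rⁿ(g) ≥ 0; Sⁿ(g) + Iⁿ(g) + Rⁿ(g) = S⁰(g) + I⁰(g) + R⁰(g); S^{n+1}(g) ≤ Sⁿ(g); and R^{n+1}(g) ≥ Rⁿ(g). -/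

import Mathlib

/-!
In Shu–Osher form every Runge–Kutta stage is a convex combination of the current value and
forward Euler steps of earlier stages, so any convex set mapped into itself by the forward Euler
step contains all stages. With the delayed term frozen at `T ∈ [0, T̄]`, the step-size bound
`τ/𝒞 · (T̄ + c) ≤ 1`, `τ/𝒞 · b ≤ 1` makes the Euler step preserve
`{S, I, R ≥ 0, S + I + R = N, S ≤ Sⁿ, R ≥ Rⁿ}`. Induction on `n` closes the argument: nonnegativity
and conservation at step `n - m` give `0 ≤ I ≤ M` there, hence `0 ≤ T ≤ T̄`.
-/

open Finset

theorem Convex.smul_add_sum_mem {E ι : Type*} [AddCommGroup E] [Module ℝ E] {K : Set E}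
    (hK : Convex ℝ K) {t : Finset ι} {a : ℝ} {w : ι → ℝ} {x : E} {y : ι → E}
    (ha : 0 ≤ a) (hw : ∀ j ∈ t, 0 ≤ w j) (hsum : a + ∑ j ∈ t, w j = 1)
    (hx : x ∈ K) (hy : ∀ j ∈ t, y j ∈ K) :
    a • x + ∑ j ∈ t, w j • y j ∈ K := by
  have h := hK.sum_mem (t := t.insertNone) (w := fun o => o.elim a w)
    (z := fun o => o.elim x y) (by rintro (_ | j) hj; exacts [ha, hw j (by simpa using hj)])
    (by simpa using hsum) (by rintro (_ | j) hj; exacts [hx, hy j (by simpa using hj)])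
  simpa only [sum_insertNone, Option.elim] using h

theorem Convex.shuOsher_stages_mem {E ι : Type*} [AddCommGroup E] [Module ℝ E]
    [LinearOrder ι] [LocallyFiniteOrderBot ι] [WellFoundedLT ι] {K : Set E}
    (hK : Convex ℝ K) {F : E → E} (hF : Set.MapsTo F K K) {v : ι → ℝ} {α : ι → ι → ℝ}
    (hv : ∀ i, 0 ≤ v i) (hα : ∀ i j, j < i → 0 ≤ α i j)
    (hcons : ∀ i, v i + ∑ j ∈ Iio i, α i j = 1) {x₀ : E} (hx₀ : x₀ ∈ K) {x : ι → E}
    (hx : ∀ i, x i = v i • x₀ + ∑ j ∈ Iio i, α i j • F (x j)) (i : ι) :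
    x i ∈ K := by
  induction i using WellFoundedLT.induction with
  | _ i ih =>
    rw [hx i]
    exact hK.smul_add_sum_mem (hv i) (fun j hj => hα i j (mem_Iio.mp hj)) (hcons i) hx₀
      fun j hj => hF (ih j (mem_Iio.mp hj))

def sirEulerStep (d b c T : ℝ) (p : ℝ × ℝ × ℝ) : ℝ × ℝ × ℝ :=
  (p.1 - d * (p.1 * T + c * p.1), p.2.1 + d * (p.1 * T - b * p.2.1),
    p.2.2 + d * (b * p.2.1 + c * p.1))

def sirInvariantSet (N S₀ R₀ : ℝ) : Set (ℝ × ℝ × ℝ) :=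
  {p | 0 ≤ p.1 ∧ 0 ≤ p.2.1 ∧ 0 ≤ p.2.2 ∧ p.1 + p.2.1 + p.2.2 = N ∧ p.1 ≤ S₀ ∧ R₀ ≤ p.2.2}

theorem convex_sirInvariantSet (N S₀ R₀ : ℝ) : Convex ℝ (sirInvariantSet N S₀ R₀) := by
  rintro ⟨S, I, R⟩ ⟨hS, hI, hR, hN, hSS, hRR⟩ ⟨S', I', R'⟩ ⟨hS', hI', hR', hN', hSS', hRR'⟩
    a b ha hb hab
  refine ⟨?_, ?_, ?_, ?_, ?_, ?_⟩ <;> simp only [Prod.smul_mk, Prod.mk_add_mk, smul_eq_mul]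
  · positivity
  · positivity
  · positivity
  · linear_combination a * hN + b * hN' + N * hab
  · nlinarith
  · nlinarith

theorem sirEulerStep_mapsTo {d b c T : ℝ} (hd : 0 ≤ d) (hb : 0 ≤ b) (hc : 0 ≤ c)
    (hT : 0 ≤ T) (hdT : d * (T + c) ≤ 1) (hdb : d * b ≤ 1) (N S₀ R₀ : ℝ) :
    Set.MapsTo (sirEulerStep d b c T) (sirInvariantSet N S₀ R₀) (sirInvariantSet N S₀ R₀) := by
  rintro ⟨S, I, R⟩ ⟨hS, hI, hR, hN, hSS, hRR⟩
  have hloss : 0 ≤ d * (S * T + c * S) := by positivity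
  have hgain : 0 ≤ d * (b * I + c * S) := by positivity
  refine ⟨?_, ?_, ?_, ?_, ?_, ?_⟩ <;> simp only [sirEulerStep]
  · nlinarith
  · nlinarith [mul_nonneg (mul_nonneg hd hS) hT]
  · linarith
  · linear_combination hN
  · linarith
  · linarith

theorem sir_shuOsher_stages_mem {ι : Type*} [LinearOrder ι] [LocallyFiniteOrderBot ι]
    [WellFoundedLT ι] {v : ι → ℝ} {α : ι → ι → ℝ}
    (hv : ∀ i, 0 ≤ v i) (hα : ∀ i j, j < i → 0 ≤ α i j)
    (hcons : ∀ i, v i + ∑ j ∈ Iio i, α i j = 1) {d b c T : ℝ} (hd : 0 ≤ d) (hb : 0 ≤ b)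
    (hc : 0 ≤ c) (hT : 0 ≤ T) (hdT : d * (T + c) ≤ 1) (hdb : d * b ≤ 1)
    {S₀ I₀ R₀ : ℝ} (hS₀ : 0 ≤ S₀) (hI₀ : 0 ≤ I₀) (hR₀ : 0 ≤ R₀) {S I R : ι → ℝ}
    (hS : ∀ i, S i = v i * S₀ + ∑ j ∈ Iio i, α i j * (S j - d * (S j * T + c * S j)))
    (hI : ∀ i, I i = v i * I₀ + ∑ j ∈ Iio i, α i j * (I j + d * (S j * T - b * I j)))
    (hR : ∀ i, R i = v i * R₀ + ∑ j ∈ Iio i, α i j * (R j + d * (b * I j + c * S j)))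
    (i : ι) :
    (S i, I i, R i) ∈ sirInvariantSet (S₀ + I₀ + R₀) S₀ R₀ :=
  (convex_sirInvariantSet _ _ _).shuOsher_stages_mem (x₀ := (S₀, I₀, R₀))
    (x := fun i => (S i, I i, R i))
    (sirEulerStep_mapsTo hd hb hc hT hdT hdb _ _ _) hv hα hcons
    ⟨hS₀, hI₀, hR₀, rfl, le_rfl, le_rfl⟩
    (fun i => by ext <;> simp [Prod.fst_sum, Prod.snd_sum, sirEulerStep, hS i, hI i, hR i]) i

theorem stmt_17_general {G : Type*} (m : ℕ) (σ τ b c : ℝ)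
    (hσ : 0 < σ) (hτdef : τ = σ / m) (hb : 0 < b) (hc : 0 < c)
    (s : ℕ) (v : Fin (s + 1) → ℝ) (α : Fin (s + 1) → Fin (s + 1) → ℝ)
    (hv : ∀ i, 0 ≤ v i) (hα : ∀ i j, j < i → 0 ≤ α i j)
    (hcons : ∀ i, v i + ∑ j ∈ Finset.Iio i, α i j = 1)
    (C : ℝ) (hC : 0 < C)
    (M Tbar : ℝ) (hTbar : 0 ≤ Tbar)
    (Φ : (G → ℝ) → (G → ℝ))
    (hΦ : ∀ X : G → ℝ, (∀ g, 0 ≤ X g ∧ X g ≤ M) → ∀ g, 0 ≤ Φ X g ∧ Φ X g ≤ Tbar)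
    (S I R : ℤ → G → ℝ)
    (SS II RR : ℤ → G → Fin (s + 1) → ℝ)
    (hSS : ∀ n : ℤ, 0 ≤ n → ∀ g, ∀ i, SS n g i = v i * S n g +
      ∑ j ∈ Finset.Iio i, α i j *
        (SS n g j - (τ / C) * (SS n g j * Φ (I (n - m)) g + c * SS n g j)))
    (hII : ∀ n : ℤ, 0 ≤ n → ∀ g, ∀ i, II n g i = v i * I n g +
      ∑ j ∈ Finset.Iio i, α i j *
        (II n g j + (τ / C) * (SS n g j * Φ (I (n - m)) g - b * II n g j)))
    (hRR : ∀ n : ℤ, 0 ≤ n → ∀ g, ∀ i, RR n g i = v i * R n g +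
      ∑ j ∈ Finset.Iio i, α i j *
        (RR n g j + (τ / C) * (b * II n g j + c * SS n g j)))
    (hSnext : ∀ n : ℤ, 0 ≤ n → ∀ g, S (n + 1) g = SS n g (Fin.last s))
    (hInext : ∀ n : ℤ, 0 ≤ n → ∀ g, I (n + 1) g = II n g (Fin.last s))
    (hRnext : ∀ n : ℤ, 0 ≤ n → ∀ g, R (n + 1) g = RR n g (Fin.last s))
    (hist_nn : ∀ n : ℤ, -(m : ℤ) ≤ n → n ≤ 0 → ∀ g,
      0 ≤ S n g ∧ 0 ≤ I n g ∧ 0 ≤ R n g)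
    (hist_sum : ∀ n : ℤ, -(m : ℤ) ≤ n → n ≤ 0 → ∀ g,
      S n g + I n g + R n g = S 0 g + I 0 g + R 0 g)
    (hM0 : ∀ g, S 0 g + I 0 g + R 0 g ≤ M)
    (hτ : τ ≤ C * min (1 / (Tbar + c)) (1 / b)) :
    ∀ n : ℤ, 0 ≤ n → ∀ g,
      (0 ≤ S n g ∧ 0 ≤ I n g ∧ 0 ≤ R n g) ∧
      S n g + I n g + R n g = S 0 g + I 0 g + R 0 g ∧
      S (n + 1) g ≤ S n g ∧ R n g ≤ R (n + 1) g := by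
  have hd : 0 ≤ τ / C := div_nonneg (hτdef ▸ div_nonneg hσ.le m.cast_nonneg) hC.le
  obtain ⟨hdT, hdb⟩ := le_min_iff.mp ((div_le_iff₀' hC).mpr hτ)
  rw [le_div_iff₀ (by positivity)] at hdT hdb
  set P : ℤ → G → Prop := fun k g =>
    (0 ≤ S k g ∧ 0 ≤ I k g ∧ 0 ≤ R k g) ∧ S k g + I k g + R k g = S 0 g + I 0 g + R 0 g
  have step : ∀ n, 0 ≤ n → (∀ g, P (n - m) g) → ∀ g, P n g →
      (S (n + 1) g, I (n + 1) g, R (n + 1) g) ∈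
        sirInvariantSet (S n g + I n g + R n g) (S n g) (R n g) := by
    intro n hn hdelay g ⟨⟨hS, hI, hR⟩, _⟩
    have hT := hΦ (I (n - m)) (fun g' => ⟨(hdelay g').1.2.1, by
      linarith [(hdelay g').1.1, (hdelay g').1.2.2, (hdelay g').2, hM0 g']⟩) g
    rw [hSnext n hn g, hInext n hn g, hRnext n hn g]
    exact sir_shuOsher_stages_mem hv hα hcons hd hb.le hc.le hT.1
      (le_trans (by gcongr; exact hT.2) hdT) hdb hS hI hR (hSS n hn g) (hII n hn g)
      (hRR n hn g) _
  have hP : ∀ n, 0 ≤ n → ∀ k, -(m : ℤ) ≤ k → k ≤ n → ∀ g, P k g := by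
    refine Int.leInduction (fun k hk₁ hk₂ g => ⟨hist_nn k hk₁ hk₂ g, hist_sum k hk₁ hk₂ g⟩) ?_
    intro n hn ih k hk₁ hk₂ g
    obtain hk | rfl := hk₂.lt_or_eq
    · exact ih k hk₁ (by omega) g
    · have hPn := ih n (by omega) le_rfl g
      obtain ⟨hS, hI, hR, hN, -⟩ := step n hn (ih _ (by omega) (by omega)) g hPn
      exact ⟨⟨hS, hI, hR⟩, hN.trans hPn.2⟩
  intro n hn g
  have hPn := hP n hn n (by omega) le_rfl g
  obtain ⟨-, -, -, -, hS, hR⟩ := step n hn (hP n hn _ (by omega) (by omega)) g hPn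
  exact ⟨hPn.1, hPn.2, hS, hR⟩

theorem stmt_17 {G : Type*} [Fintype G] (m : ℕ) (hm : 0 < m) (σ τ b c : ℝ)
    (hσ : 0 < σ) (hτdef : τ = σ / m) (hb : 0 < b) (hc : 0 < c)
    (s : ℕ) (v : Fin (s + 1) → ℝ) (α : Fin (s + 1) → Fin (s + 1) → ℝ)
    (hv : ∀ i, 0 ≤ v i) (hα : ∀ i j, j < i → 0 ≤ α i j)
    (hcons : ∀ i, v i + ∑ j ∈ Finset.Iio i, α i j = 1)
    (C : ℝ) (hC : 0 < C)
    (M Tbar : ℝ) (hM : 0 ≤ M) (hTbar : 0 ≤ Tbar)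
    (Φ : (G → ℝ) → (G → ℝ))
    (hΦ : ∀ X : G → ℝ, (∀ g, 0 ≤ X g ∧ X g ≤ M) → ∀ g, 0 ≤ Φ X g ∧ Φ X g ≤ Tbar)
    (S I R : ℤ → G → ℝ)
    (SS II RR : ℤ → G → Fin (s + 1) → ℝ)
    (hSS : ∀ n : ℤ, 0 ≤ n → ∀ g, ∀ i, SS n g i = v i * S n g +
      ∑ j ∈ Finset.Iio i, α i j *
        (SS n g j - (τ / C) * (SS n g j * Φ (I (n - m)) g + c * SS n g j)))
    (hII : ∀ n : ℤ, 0 ≤ n → ∀ g, ∀ i, II n g i = v i * I n g +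
      ∑ j ∈ Finset.Iio i, α i j *
        (II n g j + (τ / C) * (SS n g j * Φ (I (n - m)) g - b * II n g j)))
    (hRR : ∀ n : ℤ, 0 ≤ n → ∀ g, ∀ i, RR n g i = v i * R n g +
      ∑ j ∈ Finset.Iio i, α i j *
        (RR n g j + (τ / C) * (b * II n g j + c * SS n g j)))
    (hSnext : ∀ n : ℤ, 0 ≤ n → ∀ g, S (n + 1) g = SS n g (Fin.last s))
    (hInext : ∀ n : ℤ, 0 ≤ n → ∀ g, I (n + 1) g = II n g (Fin.last s))
    (hRnext : ∀ n : ℤ, 0 ≤ n → ∀ g, R (n + 1) g = RR n g (Fin.last s))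
    (hist_nn : ∀ n : ℤ, -(m : ℤ) ≤ n → n ≤ 0 → ∀ g,
      0 ≤ S n g ∧ 0 ≤ I n g ∧ 0 ≤ R n g)
    (hist_sum : ∀ n : ℤ, -(m : ℤ) ≤ n → n ≤ 0 → ∀ g,
      S n g + I n g + R n g = S 0 g + I 0 g + R 0 g)
    (hM0 : ∀ g, S 0 g + I 0 g + R 0 g ≤ M)
    (hτ : τ ≤ C * min (1 / (Tbar + c)) (1 / b)) :
    ∀ n : ℤ, 0 ≤ n → ∀ g,
      (0 ≤ S n g ∧ 0 ≤ I n g ∧ 0 ≤ R n g) ∧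
      S n g + I n g + R n g = S 0 g + I 0 g + R 0 g ∧
      S (n + 1) g ≤ S n g ∧ R n g ≤ R (n + 1) g :=
  stmt_17_general m σ τ b c hσ hτdef hb hc s v α hv hα hcons C hC M Tbar hTbar Φ hΦ S I R SS II RR
    hSS hII hRR hSnext hInext hRnext hist_nn hist_sum hM0 hτ
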